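/- arXiv:2110.08572 — 3 statements merged into one kernel-verified Lean document; each statement's English description precedes it below -/
import Mathlib

section
/- Let n ≥ 2 be an integer. Let F : ℝⁿ → ℝⁿ be differentiable everywhere with Jacobian J(x), let x* ∈ ℝⁿ satisfy F(x*) = 0 with J* := J(x*) invertible and c := ‖J*⁻¹‖, and suppose ‖J(x) − J(x*)‖ ≤ M‖x − x*‖ for all x ∈ ℝⁿ, where M > 0. Let x_k ∈ ℝⁿ, B_k ∈ ℝ^{n×n} be generated by the greedy Broyden's method with each B_k invertible. If 48√n c M ‖x₀ − x*‖ + c‖B₀ − J(x₀)‖_F ≤ 1/3, then for all k ≥ 4n + 3, ‖B_k − J*‖_F ≤ 2 c⁻¹ e·(1 − 1/n)^{k/2}. -/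
open Matrix

noncomputable def vecNorm {n : ℕ} (u : Fin n → ℝ) : ℝ := Real.sqrt (∑ i, u i ^ 2)

noncomputable def frobNorm {n : ℕ} (M : Matrix (Fin n) (Fin n) ℝ) : ℝ :=
  Real.sqrt (∑ i, ∑ j, M i j ^ 2)

noncomputable def specNorm {n : ℕ} (M : Matrix (Fin n) (Fin n) ℝ) : ℝ :=
  sSup {r : ℝ | ∃ u : Fin n → ℝ, vecNorm u = 1 ∧ r = vecNorm (M.mulVec u)}

noncomputable def broyd {n : ℕ} (B A : Matrix (Fin n) (Fin n) ℝ) (u : Fin n → ℝ) :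
    Matrix (Fin n) (Fin n) ℝ :=
  B + (∑ i, u i ^ 2)⁻¹ • ((A - B) * Matrix.vecMulVec u u)

noncomputable def matCLM {n : ℕ} (M : Matrix (Fin n) (Fin n) ℝ) :
    (Fin n → ℝ) →L[ℝ] (Fin n → ℝ) :=
  LinearMap.toContinuousLinearMap M.mulVecLin

/-! The quantities `sₖ = c √n M ‖xₖ - x*‖` and `tₖ = c ‖Bₖ - J(xₖ)‖_F` drive the argument.
A Newton-type step with `Bₖ` in place of the Jacobian, together with the Banach perturbation bound
`‖Bₖ⁻¹‖ ≤ 2c`, gives the quadratic recursion `sₖ₊₁ ≤ 2 sₖ (tₖ + 2 sₖ)`. The greedy Broyden update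
zeroes the largest column of `Bₖ - J(xₖ₊₁)`, which removes at least a `1/n` share of its squared
Frobenius norm, so with `θ = √(1 - 1/n)` we get `tₖ₊₁ ≤ θ (tₖ + sₖ + sₖ₊₁)`. Under the initial
condition `sₖ` first decays like `(2/3)ᵏ` while `tₖ` stays bounded; as `θ ≥ √(1/2) > 2/3`, this
yields `tₖ + sₖ ≤ θᵏ`, and `c ‖Bₖ - J*‖_F ≤ tₖ + sₖ`. -/

section Matrices

variable {n : ℕ}

lemma vecNorm_eq_norm (u : Fin n → ℝ) : vecNorm u = ‖WithLp.toLp 2 u‖ := by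
  simp [vecNorm, EuclideanSpace.norm_eq, sq_abs]

lemma vecNorm_nonneg (u : Fin n → ℝ) : 0 ≤ vecNorm u := Real.sqrt_nonneg _

lemma vecNorm_sq (u : Fin n → ℝ) : vecNorm u ^ 2 = ∑ i, u i ^ 2 :=
  Real.sq_sqrt (by positivity)

lemma vecNorm_sub_le (u v : Fin n → ℝ) : vecNorm (u - v) ≤ vecNorm u + vecNorm v := by
  simpa only [vecNorm_eq_norm, WithLp.toLp_sub] using norm_sub_le _ _

lemma vecNorm_smul (a : ℝ) (u : Fin n → ℝ) : vecNorm (a • u) = |a| * vecNorm u := by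
  rw [vecNorm_eq_norm, vecNorm_eq_norm, WithLp.toLp_smul, norm_smul, Real.norm_eq_abs]

lemma vecNorm_single_one (j : Fin n) : vecNorm (Pi.single j 1 : Fin n → ℝ) = 1 := by
  simp [vecNorm, Pi.single_apply]

lemma vecNorm_mulVec_single (A : Matrix (Fin n) (Fin n) ℝ) (j : Fin n) :
    vecNorm (A *ᵥ Pi.single j 1) ^ 2 = ∑ i, A i j ^ 2 := by
  simp [vecNorm_sq, mulVec_single]

section Frobenius

attribute [local instance] Matrix.frobeniusNormedAddCommGroup

lemma frobNorm_eq_norm (A : Matrix (Fin n) (Fin n) ℝ) : frobNorm A = ‖A‖ := by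
  simp [frobNorm, frobenius_norm_def, Real.sqrt_eq_rpow, sq_abs]

lemma frobNorm_sub_le (A B C : Matrix (Fin n) (Fin n) ℝ) :
    frobNorm (A - C) ≤ frobNorm (A - B) + frobNorm (B - C) := by
  simpa only [frobNorm_eq_norm] using norm_sub_le_norm_sub_add_norm_sub A B C

lemma frobNorm_sub_comm (A B : Matrix (Fin n) (Fin n) ℝ) :
    frobNorm (A - B) = frobNorm (B - A) := by
  simpa only [frobNorm_eq_norm] using norm_sub_rev A B

end Frobenius

lemma frobNorm_nonneg (A : Matrix (Fin n) (Fin n) ℝ) : 0 ≤ frobNorm A := Real.sqrt_nonneg _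

lemma frobNorm_sq (A : Matrix (Fin n) (Fin n) ℝ) : frobNorm A ^ 2 = ∑ i, ∑ j, A i j ^ 2 :=
  Real.sq_sqrt (by positivity)

lemma vecNorm_mulVec_le_frobNorm (A : Matrix (Fin n) (Fin n) ℝ) (u : Fin n → ℝ) :
    vecNorm (A *ᵥ u) ≤ frobNorm A * vecNorm u := by
  refine le_of_sq_le_sq ?_ (mul_nonneg (frobNorm_nonneg A) (vecNorm_nonneg u))
  rw [mul_pow, vecNorm_sq, vecNorm_sq, frobNorm_sq, Finset.sum_mul]
  exact Finset.sum_le_sum fun i _ => Finset.sum_mul_sq_le_sq_mul_sq Finset.univ (A i) u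

lemma specNorm_eq_norm (A : Matrix (Fin n) (Fin n) ℝ) :
    specNorm A = ‖toEuclideanCLM (𝕜 := ℝ) A‖ := by
  rw [← ContinuousLinearMap.sSup_sphere_eq_norm, specNorm]
  congr 1
  ext r
  simp only [Set.mem_ofPred_eq, Set.mem_image, mem_sphere_zero_iff_norm]
  constructor
  · rintro ⟨u, hu, rfl⟩
    exact ⟨WithLp.toLp 2 u, by rwa [← vecNorm_eq_norm],
      by rw [vecNorm_eq_norm, toEuclideanCLM_toLp]⟩
  · rintro ⟨v, hv, rfl⟩
    exact ⟨v.ofLp, by rwa [vecNorm_eq_norm], by rw [vecNorm_eq_norm, ← ofLp_toEuclideanCLM]⟩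

lemma specNorm_nonneg (A : Matrix (Fin n) (Fin n) ℝ) : 0 ≤ specNorm A := by
  rw [specNorm_eq_norm]
  exact norm_nonneg _

lemma specNorm_pos {A : Matrix (Fin n) (Fin n) ℝ} (hA : A ≠ 0) : 0 < specNorm A := by
  rw [specNorm_eq_norm, norm_pos_iff]
  exact (map_ne_zero_iff _ (toEuclideanCLM (n := Fin n) (𝕜 := ℝ)).injective).2 hA

lemma specNorm_inv_pos (hn : 0 < n) {A : Matrix (Fin n) (Fin n) ℝ} (hA : IsUnit A) :
    0 < specNorm A⁻¹ :=
  have : Nonempty (Fin n) := ⟨⟨0, hn⟩⟩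
  specNorm_pos (isUnit_nonsing_inv_iff.2 hA).ne_zero

lemma vecNorm_mulVec_le_specNorm (A : Matrix (Fin n) (Fin n) ℝ) (u : Fin n → ℝ) :
    vecNorm (A *ᵥ u) ≤ specNorm A * vecNorm u := by
  simpa only [specNorm_eq_norm, vecNorm_eq_norm, toEuclideanCLM_toLp] using
    (toEuclideanCLM (𝕜 := ℝ) A).le_opNorm (WithLp.toLp 2 u)

lemma specNorm_add_le (A B : Matrix (Fin n) (Fin n) ℝ) :
    specNorm (A + B) ≤ specNorm A + specNorm B := by
  simpa only [specNorm_eq_norm, map_add] using norm_add_le _ _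

lemma specNorm_mul_le (A B : Matrix (Fin n) (Fin n) ℝ) :
    specNorm (A * B) ≤ specNorm A * specNorm B := by
  simpa only [specNorm_eq_norm, map_mul] using norm_mul_le _ _

lemma specNorm_sub_comm (A B : Matrix (Fin n) (Fin n) ℝ) :
    specNorm (A - B) = specNorm (B - A) := by
  simpa only [specNorm_eq_norm, map_sub] using norm_sub_rev _ _

lemma specNorm_le_frobNorm (A : Matrix (Fin n) (Fin n) ℝ) : specNorm A ≤ frobNorm A := by
  rw [specNorm_eq_norm]
  refine ContinuousLinearMap.opNorm_le_bound _ (frobNorm_nonneg A) fun v => ?_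
  have h := vecNorm_mulVec_le_frobNorm A v.ofLp
  rwa [vecNorm_eq_norm, vecNorm_eq_norm, ← toEuclideanCLM_toLp, WithLp.toLp_ofLp] at h

lemma frobNorm_le_sqrt_mul_specNorm (A : Matrix (Fin n) (Fin n) ℝ) :
    frobNorm A ≤ Real.sqrt n * specNorm A := by
  refine le_of_sq_le_sq ?_ (mul_nonneg (Real.sqrt_nonneg _) (specNorm_nonneg A))
  rw [mul_pow, Real.sq_sqrt n.cast_nonneg, frobNorm_sq, Finset.sum_comm]
  calc ∑ j, ∑ i, A i j ^ 2 ≤ ∑ _j : Fin n, specNorm A ^ 2 := by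
        refine Finset.sum_le_sum fun j _ => ?_
        rw [← vecNorm_mulVec_single]
        refine pow_le_pow_left₀ (vecNorm_nonneg _) ?_ 2
        simpa [vecNorm_single_one] using vecNorm_mulVec_le_specNorm A (Pi.single j 1)
    _ = n * specNorm A ^ 2 := by simp

lemma specNorm_inv_le_two_mul {Js B : Matrix (Fin n) (Fin n) ℝ} (hJ : IsUnit Js) (hB : IsUnit B)
    (h : specNorm Js⁻¹ * specNorm (B - Js) ≤ 1 / 2) : specNorm B⁻¹ ≤ 2 * specNorm Js⁻¹ := by
  have hperturb : specNorm B⁻¹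
      ≤ specNorm Js⁻¹ + specNorm B⁻¹ * (specNorm Js⁻¹ * specNorm (B - Js)) :=
    calc specNorm B⁻¹ = specNorm (Js⁻¹ + B⁻¹ * (Js - B) * Js⁻¹) := by
          rw [← Matrix.inv_sub_inv (iff_of_true hB hJ), add_sub_cancel]
      _ ≤ specNorm Js⁻¹ + specNorm B⁻¹ * specNorm (Js - B) * specNorm Js⁻¹ := by
          grw [specNorm_add_le, specNorm_mul_le, specNorm_mul_le]
          exact specNorm_nonneg _
      _ = _ := by rw [specNorm_sub_comm]; ring
  nlinarith [specNorm_nonneg B⁻¹]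

lemma broyd_single_sub_apply (B A : Matrix (Fin n) (Fin n) ℝ) (p i j : Fin n) :
    (broyd B A (Pi.single p 1) - A) i j = if j = p then 0 else (B - A) i j := by
  by_cases h : j = p <;>
    simp [broyd, h, Matrix.mul_apply, Matrix.vecMulVec_apply, Pi.single_apply]

lemma frobNorm_broyd_single_sub_sq (B A : Matrix (Fin n) (Fin n) ℝ) (p : Fin n) :
    frobNorm (broyd B A (Pi.single p 1) - A) ^ 2
      = frobNorm (B - A) ^ 2 - vecNorm ((B - A) *ᵥ Pi.single p 1) ^ 2 := by
  rw [frobNorm_sq, frobNorm_sq, vecNorm_mulVec_single, ← Finset.sum_sub_distrib]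
  refine Finset.sum_congr rfl fun i _ => ?_
  simp only [broyd_single_sub_apply, ite_pow, ne_eq, OfNat.ofNat_ne_zero, not_false_eq_true,
    zero_pow]
  rw [Finset.sum_ite, Finset.sum_const_zero, zero_add, Finset.filter_ne',
    Finset.sum_erase_eq_sub (Finset.mem_univ p)]

lemma frobNorm_sq_le_mul_of_maximal_column (E : Matrix (Fin n) (Fin n) ℝ) (p : Fin n)
    (hp : ∀ j, vecNorm (E *ᵥ Pi.single j 1) ≤ vecNorm (E *ᵥ Pi.single p 1)) :
    frobNorm E ^ 2 ≤ n * vecNorm (E *ᵥ Pi.single p 1) ^ 2 := by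
  rw [frobNorm_sq, Finset.sum_comm]
  calc ∑ j, ∑ i, E i j ^ 2 ≤ ∑ _j : Fin n, vecNorm (E *ᵥ Pi.single p 1) ^ 2 := by
        refine Finset.sum_le_sum fun j _ => ?_
        rw [← vecNorm_mulVec_single]
        exact pow_le_pow_left₀ (vecNorm_nonneg _) (hp j) 2
    _ = n * vecNorm (E *ᵥ Pi.single p 1) ^ 2 := by simp

lemma frobNorm_broyd_single_sub_le (B A : Matrix (Fin n) (Fin n) ℝ) (p : Fin n)
    (hp : ∀ j, vecNorm ((B - A) *ᵥ Pi.single j 1) ≤ vecNorm ((B - A) *ᵥ Pi.single p 1)) :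
    frobNorm (broyd B A (Pi.single p 1) - A) ≤ Real.sqrt (1 - 1 / n) * frobNorm (B - A) := by
  refine le_of_sq_le_sq ?_ (mul_nonneg (Real.sqrt_nonneg _) (frobNorm_nonneg _))
  rw [mul_pow, Real.sq_sqrt (Nat.one_sub_one_div_cast_nonneg n), frobNorm_broyd_single_sub_sq]
  have hcol := div_le_of_le_mul₀ n.cast_nonneg (sq_nonneg _)
    ((frobNorm_sq_le_mul_of_maximal_column (B - A) p hp).trans_eq (mul_comm _ _))
  linarith [show (1 - 1 / (n : ℝ)) * frobNorm (B - A) ^ 2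
    = frobNorm (B - A) ^ 2 - frobNorm (B - A) ^ 2 / n by ring]

end Matrices

section Newton

variable {n : ℕ} {F : (Fin n → ℝ) → (Fin n → ℝ)} {J : (Fin n → ℝ) → Matrix (Fin n) (Fin n) ℝ}
  {xs : Fin n → ℝ} {M : ℝ}

lemma vecNorm_sub_sub_mulVec_le (hF : ∀ x, HasFDerivAt F (matCLM (J x)) x) (hM : 0 ≤ M)
    (hLip : ∀ x, specNorm (J x - J xs) ≤ M * vecNorm (x - xs)) (y : Fin n → ℝ) :
    vecNorm (F y - F xs - J xs *ᵥ (y - xs)) ≤ M * vecNorm (y - xs) ^ 2 := by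
  set v := y - xs
  let toL2 : (Fin n → ℝ) →L[ℝ] EuclideanSpace ℝ (Fin n) := (EuclideanSpace.equiv (Fin n) ℝ).symm
  have hderiv : ∀ t : ℝ, HasDerivAt (fun t : ℝ => toL2 (F (xs + t • v) - t • (J xs *ᵥ v)))
      (toL2 ((J (xs + t • v) - J xs) *ᵥ v)) t := by
    intro t
    have hpath := ((hasDerivAt_id t).smul_const v).const_add xs
    have := ((hF _).comp_hasDerivAt t hpath).sub ((hasDerivAt_id t).smul_const (J xs *ᵥ v))
    refine (toL2.hasFDerivAt.comp_hasDerivAt t this).congr_deriv ?_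
    simp [matCLM, sub_mulVec]
  have hbound : ∀ t ∈ Set.Ico (0 : ℝ) 1,
      ‖toL2 ((J (xs + t • v) - J xs) *ᵥ v)‖ ≤ M * vecNorm v ^ 2 := by
    rintro t ⟨ht0, ht1⟩
    rw [← vecNorm_eq_norm]
    calc vecNorm ((J (xs + t • v) - J xs) *ᵥ v) ≤ M * (t * vecNorm v) * vecNorm v := by
          grw [vecNorm_mulVec_le_specNorm, hLip, add_sub_cancel_left, vecNorm_smul, abs_of_nonneg ht0]
          exact vecNorm_nonneg v
      _ ≤ M * vecNorm v ^ 2 := by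
          have := vecNorm_nonneg v
          nlinarith [mul_nonneg hM (mul_nonneg this this)]
  have hmvt := norm_image_sub_le_of_norm_deriv_le_segment_01'
    (fun t _ => (hderiv t).hasDerivWithinAt) hbound
  rwa [← map_sub, ← vecNorm_eq_norm, one_smul, one_smul, zero_smul, zero_smul, add_zero,
    sub_zero, add_sub_cancel, sub_right_comm] at hmvt

lemma vecNorm_newton_step_sub_le (hF : ∀ x, HasFDerivAt F (matCLM (J x)) x) (hxs : F xs = 0)
    (hM : 0 ≤ M) (hLip : ∀ x, specNorm (J x - J xs) ≤ M * vecNorm (x - xs))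
    {B : Matrix (Fin n) (Fin n) ℝ} (hB : IsUnit B) (x : Fin n → ℝ) :
    vecNorm (x - B⁻¹ *ᵥ F x - xs) ≤ specNorm B⁻¹
      * (specNorm (B - J xs) * vecNorm (x - xs) + M * vecNorm (x - xs) ^ 2) := by
  have hstep : x - B⁻¹ *ᵥ F x - xs
      = B⁻¹ *ᵥ ((B - J xs) *ᵥ (x - xs) - (F x - F xs - J xs *ᵥ (x - xs))) := by
    have hinner : (B - J xs) *ᵥ (x - xs) - (F x - F xs - J xs *ᵥ (x - xs))
        = B *ᵥ (x - xs) - F x := by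
      rw [hxs, sub_mulVec]
      abel
    rw [hinner, mulVec_sub, mulVec_mulVec, nonsing_inv_mul _ ((isUnit_iff_isUnit_det B).1 hB),
      one_mulVec]
    abel
  rw [hstep]
  grw [vecNorm_mulVec_le_specNorm, vecNorm_sub_le, vecNorm_mulVec_le_specNorm,
    vecNorm_sub_sub_mulVec_le hF hM hLip]
  all_goals exact specNorm_nonneg _

lemma frobNorm_jacobian_sub_le (hLip : ∀ x, specNorm (J x - J xs) ≤ M * vecNorm (x - xs))
    (z : Fin n → ℝ) : frobNorm (J z - J xs) ≤ Real.sqrt n * M * vecNorm (z - xs) := by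
  grw [frobNorm_le_sqrt_mul_specNorm, hLip, mul_assoc]

lemma frobNorm_sub_jacobian_le (hLip : ∀ x, specNorm (J x - J xs) ≤ M * vecNorm (x - xs))
    (B : Matrix (Fin n) (Fin n) ℝ) (z : Fin n → ℝ) :
    frobNorm (B - J xs) ≤ frobNorm (B - J z) + Real.sqrt n * M * vecNorm (z - xs) := by
  grw [frobNorm_sub_le B (J z), frobNorm_jacobian_sub_le hLip]

lemma newton_step_scaled_le (hn : 0 < n) (hF : ∀ x, HasFDerivAt F (matCLM (J x)) x)
    (hxs : F xs = 0) (hJs : IsUnit (J xs)) (hM : 0 ≤ M)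
    (hLip : ∀ x, specNorm (J x - J xs) ≤ M * vecNorm (x - xs))
    {c : ℝ} (hc : c = specNorm (J xs)⁻¹) {B : Matrix (Fin n) (Fin n) ℝ} (hB : IsUnit B)
    (x : Fin n → ℝ)
    (h : c * frobNorm (B - J x) + c * Real.sqrt n * M * vecNorm (x - xs) ≤ 1 / 2) :
    c * Real.sqrt n * M * vecNorm (x - B⁻¹ *ᵥ F x - xs)
      ≤ 2 * (c * Real.sqrt n * M * vecNorm (x - xs))
        * (c * frobNorm (B - J x) + 2 * (c * Real.sqrt n * M * vecNorm (x - xs))) := by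
  set r := vecNorm (x - xs)
  set s := c * Real.sqrt n * M * r
  have hc0 : 0 ≤ c := hc ▸ specNorm_nonneg _
  have hr0 : 0 ≤ r := vecNorm_nonneg _
  have hσ : c * specNorm (B - J xs) ≤ c * frobNorm (B - J x) + s := by
    grw [specNorm_le_frobNorm, frobNorm_sub_jacobian_le hLip B x]
    linarith
  have hBinv : specNorm B⁻¹ ≤ 2 * c :=
    hc ▸ specNorm_inv_le_two_mul hJs hB (by rw [← hc]; linarith)
  have hMr : c * M * r ≤ s := by
    have hsqrt : 1 ≤ Real.sqrt n := Real.one_le_sqrt.2 (by exact_mod_cast hn)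
    have : 0 ≤ c * M * r := by positivity
    nlinarith
  calc c * Real.sqrt n * M * vecNorm (x - B⁻¹ *ᵥ F x - xs)
      ≤ c * Real.sqrt n * M * (2 * c * (specNorm (B - J xs) * r + M * r ^ 2)) := by
        grw [vecNorm_newton_step_sub_le hF hxs hM hLip hB x, hBinv]
        exact add_nonneg (mul_nonneg (specNorm_nonneg _) hr0) (by positivity)
    _ = 2 * (c * specNorm (B - J xs)) * s + 2 * (c * M * r) * s := by ring
    _ ≤ 2 * (c * frobNorm (B - J x) + s) * s + 2 * s * s := by grw [hσ, hMr]
    _ = 2 * s * (c * frobNorm (B - J x) + 2 * s) := by ring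

lemma broyden_step_scaled_le (hLip : ∀ x, specNorm (J x - J xs) ≤ M * vecNorm (x - xs))
    {c : ℝ} (hc : 0 ≤ c) (B : Matrix (Fin n) (Fin n) ℝ) (x x' : Fin n → ℝ) (p : Fin n)
    (hp : ∀ j, vecNorm ((B - J x') *ᵥ Pi.single j 1) ≤ vecNorm ((B - J x') *ᵥ Pi.single p 1)) :
    c * frobNorm (broyd B (J x') (Pi.single p 1) - J x')
      ≤ Real.sqrt (1 - 1 / n) * (c * frobNorm (B - J x) + c * Real.sqrt n * M * vecNorm (x - xs)
        + c * Real.sqrt n * M * vecNorm (x' - xs)) := by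
  calc c * frobNorm (broyd B (J x') (Pi.single p 1) - J x')
      ≤ c * (Real.sqrt (1 - 1 / n) * (frobNorm (B - J x) + Real.sqrt n * M * vecNorm (x - xs)
        + Real.sqrt n * M * vecNorm (x' - xs))) := by
        grw [frobNorm_broyd_single_sub_le B (J x') p hp, frobNorm_sub_le B (J xs),
          frobNorm_sub_comm (J xs), frobNorm_jacobian_sub_le hLip,
          frobNorm_sub_jacobian_le hLip B x]
    _ = _ := by ring

end Newton

lemma twenty_div_twentynine_le_sqrt_one_sub_inv {n : ℕ} (hn : 2 ≤ n) :
    20 / 29 ≤ Real.sqrt (1 - 1 / n) := by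
  have : (1 : ℝ) / n ≤ 1 / 2 := by gcongr; exact_mod_cast hn
  exact Real.le_sqrt_of_sq_le (by linarith)

section TwoPhase

variable {s t : ℕ → ℝ} {θ : ℝ}

lemma superlinear_phase_bound (hs : ∀ k, 0 ≤ s k) (ht : ∀ k, 0 ≤ t k) (hθ : θ ≤ 1)
    (h0 : 48 * s 0 + t 0 ≤ 1 / 3)
    (hs_succ : ∀ k, t k + s k ≤ 1 / 2 → s (k + 1) ≤ 2 * s k * (t k + 2 * s k))
    (ht_succ : ∀ k, t (k + 1) ≤ θ * (t k + s k + s (k + 1))) (k : ℕ) :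
    s k ≤ (2 / 3) ^ k * s 0 ∧ t k ≤ t 0 + 5 * s 0 * (1 - (2 / 3) ^ k) := by
  induction k with
  | zero => simp
  | succ k ih =>
    obtain ⟨hsk, htk⟩ := ih
    have hq : (0 : ℝ) ≤ (2 / 3) ^ k ∧ (2 / 3 : ℝ) ^ k ≤ 1 :=
      ⟨by positivity, pow_le_one₀ (by norm_num) (by norm_num)⟩
    have hs0 := hs 0
    have hsk1 : s (k + 1) ≤ 2 / 3 * s k := by
      have hsmall : t k + 2 * s k ≤ 1 / 3 := by nlinarith
      nlinarith [hs_succ k (by linarith [hs k]), hs k]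
    have hθX : θ * (t k + s k + s (k + 1)) ≤ t k + s k + s (k + 1) := by
      nlinarith [hs k, hs (k + 1), ht k]
    rw [pow_succ]
    constructor <;> nlinarith [ht_succ k]

/- `20 / 29` is the least `θ` with `θ (50 - 5/3) ≥ 50 · 2/3`: then
`θ (sₖ + sₖ₊₁) ≤ θ (5/3) (2/3)ᵏ s₀` is absorbed by the decrease of `-50 s₀ (2/3)ᵏ`. -/
lemma linear_phase_bound (hs0 : 0 ≤ s 0) (hθ : 20 / 29 ≤ θ) (hs : ∀ k, s k ≤ (2 / 3) ^ k * s 0)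
    (ht_succ : ∀ k, t (k + 1) ≤ θ * (t k + s k + s (k + 1))) (k : ℕ) :
    t k ≤ θ ^ k * t 0 + 50 * s 0 * (θ ^ k - (2 / 3) ^ k) := by
  induction k with
  | zero => simp
  | succ k ih =>
    have hq : (0 : ℝ) ≤ (2 / 3) ^ k * s 0 := by positivity
    have hsk1 : s (k + 1) ≤ 2 / 3 * ((2 / 3) ^ k * s 0) := by
      have := hs (k + 1)
      rw [pow_succ] at this
      linarith
    calc t (k + 1) ≤ θ * (t k + s k + s (k + 1)) := ht_succ k
      _ ≤ θ * (θ ^ k * t 0 + 50 * s 0 * (θ ^ k - (2 / 3) ^ k) + (2 / 3) ^ k * s 0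
            + 2 / 3 * ((2 / 3) ^ k * s 0)) := by
            gcongr
            linarith [hs k]
      _ ≤ θ ^ (k + 1) * t 0 + 50 * s 0 * (θ ^ (k + 1) - (2 / 3) ^ (k + 1)) := by
          rw [pow_succ, pow_succ]
          nlinarith

theorem add_le_pow_mul_of_two_phase (hs : ∀ k, 0 ≤ s k) (ht : ∀ k, 0 ≤ t k)
    (hθ₀ : 20 / 29 ≤ θ) (hθ₁ : θ ≤ 1) (h0 : 48 * s 0 + t 0 ≤ 1 / 3)
    (hs_succ : ∀ k, t k + s k ≤ 1 / 2 → s (k + 1) ≤ 2 * s k * (t k + 2 * s k))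
    (ht_succ : ∀ k, t (k + 1) ≤ θ * (t k + s k + s (k + 1))) (k : ℕ) :
    t k + s k ≤ θ ^ k * (t 0 + 50 * s 0) := by
  have hs_decay k := (superlinear_phase_bound hs ht hθ₁ h0 hs_succ ht_succ k).1
  have htk := linear_phase_bound (hs 0) hθ₀ hs_decay ht_succ k
  have : (0 : ℝ) ≤ (2 / 3) ^ k * s 0 := mul_nonneg (by positivity) (hs 0)
  nlinarith [hs_decay k]

end TwoPhase


theorem greedy_broyden_jacobian_to_Jstar {n : ℕ} (hn : 2 ≤ n)
    (F : (Fin n → ℝ) → (Fin n → ℝ))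
    (J : (Fin n → ℝ) → Matrix (Fin n) (Fin n) ℝ)
    (hF : ∀ x, HasFDerivAt F (matCLM (J x)) x)
    (xs : Fin n → ℝ) (hxs : F xs = 0) (hJs : IsUnit (J xs))
    (c : ℝ) (hc : c = specNorm (J xs)⁻¹)
    (M : ℝ) (hM : 0 < M)
    (hLip : ∀ x, specNorm (J x - J xs) ≤ M * vecNorm (x - xs))
    (x : ℕ → (Fin n → ℝ)) (B : ℕ → Matrix (Fin n) (Fin n) ℝ) (idx : ℕ → Fin n)
    (hBinv : ∀ k, IsUnit (B k))
    (hxrec : ∀ k, x (k + 1) = x k - (B k)⁻¹.mulVec (F (x k)))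
    (hgreedy : ∀ k, ∀ i : Fin n,
      vecNorm ((B k - J (x (k + 1))).mulVec (Pi.single i 1))
        ≤ vecNorm ((B k - J (x (k + 1))).mulVec (Pi.single (idx k) 1)))
    (hBrec : ∀ k, B (k + 1) = broyd (B k) (J (x (k + 1))) (Pi.single (idx k) 1))
    (hinit : 48 * Real.sqrt n * c * M * vecNorm (x 0 - xs)
      + c * frobNorm (B 0 - J (x 0)) ≤ 1 / 3) :
    ∀ k : ℕ, 4 * n + 3 ≤ k →
      frobNorm (B k - J xs)
        ≤ 2 * c⁻¹ * Real.exp 1 * (1 - 1 / (n : ℝ)) ^ ((k : ℝ) / 2) := by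
  have hn0 : 0 < n := by omega
  have hc0 : 0 < c := hc ▸ specNorm_inv_pos hn0 hJs
  set θ := Real.sqrt (1 - 1 / n)
  set s₀ := c * Real.sqrt n * M * vecNorm (x 0 - xs)
  set t₀ := c * frobNorm (B 0 - J (x 0))
  have h0 : 48 * s₀ + t₀ ≤ 1 / 3 := by convert hinit using 2; ring
  have hsmall : t₀ + 50 * s₀ ≤ 1 := by
    linarith [mul_nonneg hc0.le (frobNorm_nonneg (B 0 - J (x 0)))]
  have hbound := add_le_pow_mul_of_two_phase
    (s := fun k => c * Real.sqrt n * M * vecNorm (x k - xs))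
    (t := fun k => c * frobNorm (B k - J (x k)))
    (fun k => mul_nonneg (by positivity) (vecNorm_nonneg _))
    (fun k => mul_nonneg hc0.le (frobNorm_nonneg _)) (twenty_div_twentynine_le_sqrt_one_sub_inv hn)
    (Real.sqrt_le_one.2 (Nat.one_sub_one_div_cast_le_one n)) h0
    (fun k hk => by
      simpa only [hxrec k] using newton_step_scaled_le hn0 hF hxs hJs hM.le hLip hc (hBinv k) _ hk)
    (fun k => by
      simpa only [hBrec k] using broyden_step_scaled_le hLip hc0.le _ (x k) _ _ (hgreedy k))
  intro k _
  have hdist : c * frobNorm (B k - J xs) ≤ θ ^ k := by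
    grw [frobNorm_sub_jacobian_le hLip (B k) (x k), mul_add, ← mul_assoc, ← mul_assoc, hbound k,
      hsmall, mul_one]
  calc frobNorm (B k - J xs) = c⁻¹ * (c * frobNorm (B k - J xs)) := by field_simp
    _ ≤ c⁻¹ * θ ^ k := by gcongr
    _ ≤ 2 * Real.exp 1 * (c⁻¹ * θ ^ k) :=
        le_mul_of_one_le_left (by positivity) (by linarith [Real.add_one_le_exp 1])
    _ = _ := by
      rw [Real.rpow_div_two_eq_sqrt _ (Nat.one_sub_one_div_cast_nonneg n), Real.rpow_natCast]
      ring
end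

section
/- Let n ≥ 2 be an integer and k an integer with k ≥ 4n + 3. Then e^k·(1 − 1/n)^{k(k−1)/4} ≤ e·(1 − 1/n)^{k/2}. -/
theorem rate_comparison_greedy (n k : ℕ) (hn : 2 ≤ n) (hk : 4 * n + 3 ≤ k) :
    Real.exp k * (1 - 1 / (n : ℝ)) ^ ((k : ℝ) * ((k : ℝ) - 1) / 4)
      ≤ Real.exp 1 * (1 - 1 / (n : ℝ)) ^ ((k : ℝ) / 2) := by
  have hnR : (2:ℝ) ≤ n := by exact_mod_cast hn
  have hkR : 4*(n:ℝ) + 3 ≤ k := by exact_mod_cast hk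
  have hn0 : (0:ℝ) < n := by linarith
  have ha : (0:ℝ) < 1 - 1/(n:ℝ) := by
    have h2 : 1/(n:ℝ) ≤ 1/2 := by
      apply one_div_le_one_div_of_le <;> linarith
    linarith
  rw [Real.rpow_def_of_pos ha, Real.rpow_def_of_pos ha, ← Real.exp_add, ← Real.exp_add]
  apply Real.exp_le_exp.2
  set L := Real.log (1 - 1/(n:ℝ)) with hL
  have hlog : L ≤ -(1/(n:ℝ)) := by
    have := Real.log_le_sub_one_of_pos ha
    linarith
  have hk0 : (0:ℝ) < k := by linarith
  have hc : (0:ℝ) ≤ (k:ℝ)*((k:ℝ)-3)/4 := by nlinarith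
  have h1 : (k:ℝ)*((k:ℝ)-3)/4 * (1/(n:ℝ)) ≥ (k:ℝ) := by
    rw [ge_iff_le, div_mul_eq_mul_div, le_div_iff₀ (by linarith : (0:ℝ) < 4)]
    rw [mul_one_div, le_div_iff₀ hn0]
    nlinarith
  have h2 : (k:ℝ)*((k:ℝ)-3)/4 * (1/(n:ℝ)) ≤ (k:ℝ)*((k:ℝ)-3)/4 * (-L) :=
    mul_le_mul_of_nonneg_left (by linarith) hc
  nlinarith
end

section
/- Let n ≥ 2 be an integer and k an integer with k ≥ 8n·ln(n e) + 1. Then 2·(1/k)^{k/2} ≥ e^{k − k(k−1)/(4n)}. -/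
theorem rate_comparison_original (n k : ℕ) (hn : 2 ≤ n)
    (hk : 8 * (n : ℝ) * Real.log ((n : ℝ) * Real.exp 1) + 1 ≤ (k : ℝ)) :
    Real.exp ((k : ℝ) - (k : ℝ) * ((k : ℝ) - 1) / (4 * (n : ℝ)))
      ≤ 2 * (1 / (k : ℝ)) ^ ((k : ℝ) / 2) := by
  have hN : (2:ℝ) ≤ (n:ℝ) := by exact_mod_cast hn
  have hN0 : (0:ℝ) < (n:ℝ) := by linarith
  have hlogNe : Real.log ((n:ℝ) * Real.exp 1) = Real.log n + 1 := by
    rw [Real.log_mul (by positivity) (Real.exp_ne_zero 1), Real.log_exp]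
  rw [hlogNe] at hk
  have hM : Real.log 2 ≤ Real.log n := Real.log_le_log (by norm_num) hN
  have hl2 : (0.6931471803:ℝ) < Real.log 2 := Real.log_two_gt_d9
  have hl2u : Real.log 2 < 0.6931471808 := Real.log_two_lt_d9
  have hNM : 2 * Real.log 2 ≤ (n:ℝ) * Real.log n :=
    mul_le_mul hN hM (by linarith) (by linarith)
  have hK1 : (1:ℝ) ≤ (k:ℝ) := by nlinarith [hNM]
  have hK0 : (0:ℝ) < (k:ℝ) := by linarith
  have htan : Real.log k ≤ (k:ℝ)/(8*(n:ℝ)) - 1 + (3 * Real.log 2 + Real.log n) := by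
    have h1 : Real.log ((k:ℝ) / (8*(n:ℝ))) ≤ (k:ℝ)/(8*(n:ℝ)) - 1 :=
      Real.log_le_sub_one_of_pos (by positivity)
    rw [Real.log_div (by linarith) (by positivity)] at h1
    have hlog8N : Real.log (8*(n:ℝ)) = Real.log 8 + Real.log n :=
      Real.log_mul (by norm_num) (by positivity)
    have hlog8 : Real.log 8 = 3 * Real.log 2 := by
      rw [show (8:ℝ) = 2^3 by norm_num, Real.log_pow]; push_cast; ring
    linarith
  set K := (k:ℝ)
  set N := (n:ℝ)
  set L := Real.log K with hL
  set M := Real.log N with hMdef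
  have hNK : (0:ℝ) < N * K := mul_pos hN0 hK0
  have hmain' : 4*N*K + 2*N*K*L ≤ K*(K-1) := by
    have h1 : 2*N*K*L ≤ 2*N*K*(K/(8*N) - 1 + (3*Real.log 2 + M)) :=
      mul_le_mul_of_nonneg_left htan (by positivity)
    have h2 : 2*N*K*(K/(8*N) - 1 + (3*Real.log 2 + M))
        = K*K/4 - 2*N*K + 6*Real.log 2*(N*K) + 2*(N*K*M) := by
      field_simp; ring
    rw [h2] at h1
    have h3 : (3/4)*K*(8*N*(M+1)+1) ≤ (3/4)*K*K :=
      mul_le_mul_of_nonneg_left hk (by positivity)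
    have h4 : Real.log 2 * (N*K) ≤ M * (N*K) :=
      mul_le_mul_of_nonneg_right hM hNK.le
    have h5 : Real.log 2 * (N*K) ≤ 0.6931471808 * (N*K) :=
      mul_le_mul_of_nonneg_right hl2u.le hNK.le
    have h6 : 2*K ≤ N*K := mul_le_mul_of_nonneg_right hN hK0.le
    nlinarith [h1, h3, h4, h5, h6]
  have hmain : K - K*(K-1)/(4*N) ≤ Real.log 2 - K/2 * L := by
    have h4N : (0:ℝ) < 4*N := by linarith
    have h7 : K + K/2 * L ≤ K*(K-1)/(4*N) := by
      rw [le_div_iff₀ h4N]; nlinarith [hmain']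
    linarith [h7, hl2]
  calc Real.exp (K - K*(K-1)/(4*N)) ≤ Real.exp (Real.log 2 - K/2 * L) :=
        Real.exp_le_exp.mpr hmain
    _ = 2 * (1/K) ^ (K/2) := by
        rw [Real.exp_sub, Real.exp_log (by norm_num : (0:ℝ) < 2),
          Real.rpow_def_of_pos (by positivity : (0:ℝ) < 1/K),
          Real.log_div one_ne_zero (ne_of_gt hK0), Real.log_one]
        rw [show (0 - Real.log K) * (K/2) = -(K/2 * L) by rw [hL]; ring,
          Real.exp_neg, div_eq_mul_inv]
end
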